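/- arXiv:1607.02598 — 7 statements merged into one kernel-verified Lean document; each statement's English description precedes it below -/
import Mathlib

section
/- Let Q and G be n×n real matrices such that Q − G and Q − (G + Gᵀ)/2 are both invertible. Then the matrix I − ((Gᵀ − G)/2)(Q − G)⁻¹ is invertible and its inverse equals I + ((Gᵀ − G)/2)(Q − (Gᵀ + G)/2)⁻¹. -/
open Matrix

/-- The matrix-inversion-lemma identity (Equation (15)):
`(I - ((Gᵀ - G)/2)(Q - G)⁻¹)⁻¹ = I + ((Gᵀ - G)/2)(Q - (Gᵀ + G)/2)⁻¹`. -/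
theorem matrix_inversion_lemma_step
    (n : ℕ) (Q G : Matrix (Fin n) (Fin n) ℝ)
    (h1 : IsUnit (Q - G)) (h2 : IsUnit (Q - (2:ℝ)⁻¹ • (G + Gᵀ))) :
    IsUnit (1 - ((2:ℝ)⁻¹ • (Gᵀ - G)) * (Q - G)⁻¹) ∧
    (1 - ((2:ℝ)⁻¹ • (Gᵀ - G)) * (Q - G)⁻¹)⁻¹ =
      1 + ((2:ℝ)⁻¹ • (Gᵀ - G)) * (Q - (2:ℝ)⁻¹ • (Gᵀ + G))⁻¹ := by
  set A := Q - G with hA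
  set K := (2:ℝ)⁻¹ • (Gᵀ - G) with hK
  set S := Q - (2:ℝ)⁻¹ • (G + Gᵀ) with hS
  have hS' : Q - (2:ℝ)⁻¹ • (Gᵀ + G) = S := by rw [hS, add_comm Gᵀ G]
  have hd1 : IsUnit A.det := (Matrix.isUnit_iff_isUnit_det A).mp h1
  have hd2 : IsUnit S.det := (Matrix.isUnit_iff_isUnit_det S).mp h2
  have hAK : A - K = S := by rw [hA, hK, hS]; module
  have hSK : S + K = A := by rw [hA, hK, hS]; module
  have key : 1 - K * A⁻¹ = S * A⁻¹ := by
    rw [← hAK, sub_mul, Matrix.mul_nonsing_inv A hd1]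
  have key2 : 1 + K * S⁻¹ = A * S⁻¹ := by
    rw [← hSK, add_mul, Matrix.mul_nonsing_inv S hd2]
  constructor
  · rw [key]
    exact h2.mul ((Matrix.isUnit_nonsing_inv_iff ..).mpr h1)
  · rw [key, hS', key2, Matrix.mul_inv_rev, Matrix.nonsing_inv_nonsing_inv A hd1]
end

section
/- Let Q be an n×n real diagonal matrix and G an n×n real matrix such that Q − G and Q − G' are invertible, where G' = (G + Gᵀ)/2. Let α ∈ ℝⁿ, c ∈ ℝ, v = (α − c·1)/2, and define the price vector p₁ = α − (Q − G)(Q − G')⁻¹ v and the investment vector x₁ = (Q − G)⁻¹(α − p₁). Then x₁ = (Q − G')⁻¹ v, and the profit satisfies (p₁ − c·1)ᵀ x₁ = vᵀ (Q − G')⁻¹ v. -/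
open Matrix

/-!
With `A = Q - G` and `S = Q - G'`, the symmetry of `Q` makes `S = (A + Aᵀ)/2` the symmetric part
of `A`, so the quadratic forms of `A` and `S` agree. The price `p₁` is built so that
`α - p₁ = A S⁻¹ v`, hence `x₁ = S⁻¹ v =: u`, and since `α - c·1 = 2v` the margin is
`p₁ - c·1 = 2v - A u`. The profit is therefore `2 v ⬝ u - uᵀ A u = 2 v ⬝ u - uᵀ S u = v ⬝ u`.
-/

section SymmetricPart

variable {ι K : Type*} [Field K] [NeZero (2 : K)]

theorem dotProduct_symmPart_mulVec_self [Fintype ι] (A : Matrix ι ι K) (u : ι → K) :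
    u ⬝ᵥ ((2 : K)⁻¹ • (A + Aᵀ)) *ᵥ u = u ⬝ᵥ A *ᵥ u := by
  rw [smul_mulVec, dotProduct_smul, add_mulVec, dotProduct_add,
    dotProduct_transpose_mulVec, ← two_mul, smul_eq_mul, inv_mul_cancel_left₀ two_ne_zero]

theorem sub_symmPart_eq_symmPart_sub {Q : Matrix ι ι K} (hQ : Qᵀ = Q) (G : Matrix ι ι K) :
    Q - (2 : K)⁻¹ • (G + Gᵀ) = (2 : K)⁻¹ • ((Q - G) + (Q - G)ᵀ) := by
  rw [transpose_sub, hQ, show Q - G + (Q - Gᵀ) = (2 : K) • Q - (G + Gᵀ) by module, smul_sub,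
    inv_smul_smul₀ two_ne_zero]

end SymmetricPart

/-- Theorem 3 (profit under price discrimination): with `p₁ = α - (Q - G)(Q - G')⁻¹ v` and
`x₁ = (Q - G)⁻¹(α - p₁)`, one has `x₁ = (Q - G')⁻¹ v` and profit
`(p₁ - c·1)ᵀ x₁ = vᵀ (Q - G')⁻¹ v`, where `G' = (G + Gᵀ)/2` and `v = (α - c·1)/2`. -/
theorem profit_with_externalities
    (n : ℕ) (Q G : Matrix (Fin n) (Fin n) ℝ) (hQ : Q.IsDiag)
    (h1 : IsUnit (Q - G)) (h2 : IsUnit (Q - (2:ℝ)⁻¹ • (G + Gᵀ)))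
    (α : Fin n → ℝ) (c : ℝ) (v p₁ x₁ : Fin n → ℝ)
    (hv : v = (2:ℝ)⁻¹ • (α - c • (1 : Fin n → ℝ)))
    (hp : p₁ = α - ((Q - G) * (Q - (2:ℝ)⁻¹ • (G + Gᵀ))⁻¹) *ᵥ v)
    (hx : x₁ = (Q - G)⁻¹ *ᵥ (α - p₁)) :
    x₁ = (Q - (2:ℝ)⁻¹ • (G + Gᵀ))⁻¹ *ᵥ v ∧
    (p₁ - c • (1 : Fin n → ℝ)) ⬝ᵥ x₁ = v ⬝ᵥ ((Q - (2:ℝ)⁻¹ • (G + Gᵀ))⁻¹ *ᵥ v) := by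
  set A := Q - G
  set S := Q - (2:ℝ)⁻¹ • (G + Gᵀ)
  set u := S⁻¹ *ᵥ v
  have hxu : x₁ = u := by
    rw [hx, hp, sub_sub_cancel, mulVec_mulVec,
      nonsing_inv_mul_cancel_left A _ ((isUnit_iff_isUnit_det A).mp h1)]
  have hSu : S *ᵥ u = v := by
    rw [mulVec_mulVec, mul_nonsing_inv _ ((isUnit_iff_isUnit_det S).mp h2), one_mulVec]
  have hS_symmPart : S = (2:ℝ)⁻¹ • (A + Aᵀ) := sub_symmPart_eq_symmPart_sub hQ.isSymm G
  have hquad : u ⬝ᵥ A *ᵥ u = u ⬝ᵥ v := by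
    rw [← dotProduct_symmPart_mulVec_self, ← hS_symmPart, hSu]
  have hmargin : p₁ - c • (1 : Fin n → ℝ) = (2:ℝ) • v - A *ᵥ u := by
    have h2v : (2:ℝ) • v = α - c • (1 : Fin n → ℝ) := by rw [hv, smul_inv_smul₀ two_ne_zero]
    rw [hp, h2v, ← mulVec_mulVec]
    abel
  refine ⟨hxu, ?_⟩
  rw [hxu, hmargin, sub_dotProduct, smul_dotProduct, dotProduct_comm (A *ᵥ u) u, hquad,
    dotProduct_comm u v, smul_eq_mul]
  ring
end

section
/- Let R be an n×n real matrix whose symmetric part (R + Rᵀ)/2 is positive definite (equivalently xᵀRx > 0 for all nonzero x ∈ ℝⁿ, which implies R is invertible). Then every (complex) eigenvalue of the matrix R·R⁻ᵀ + Rᵀ·R⁻¹ is real and lies in the interval [−2, 2]. -/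
/-!
With `A` the complex matrix `R` and `U = A (Aᴴ)⁻¹`, the matrix in question is `U + U⁻¹`, so
each of its eigenvalues is `c + c⁻¹` for an eigenvalue `c` of `U`. If `U v = c v`, then
`w = (Aᴴ)⁻¹ v` satisfies `A w = c Aᴴ w`, hence `z = w* A w` equals `c z̄`. Positivity of the
symmetric part of `R` gives `Re z > 0`, so `|c| = 1` and `c + c⁻¹ = 2 Re c ∈ [-2, 2]`.
-/

open Matrix ComplexConjugate

theorem spectrum.exists_add_inv_eq_of_mem_add_inv {𝕜 A : Type*} [Field 𝕜] [IsAlgClosed 𝕜]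
    [Ring A] [Algebra 𝕜 A] (u : Aˣ) {μ : 𝕜} (hμ : μ ∈ spectrum 𝕜 (↑u + ↑u⁻¹ : A)) :
    ∃ c ∈ spectrum 𝕜 (u : A), c + c⁻¹ = μ := by
  open Polynomial in
  obtain ⟨c, hc⟩ := IsAlgClosed.exists_root (C 1 * X ^ 2 + C (-μ) * X + C 1)
    (by rw [degree_quadratic one_ne_zero]; decide)
  simp only [IsRoot, eval_add, eval_mul, eval_C, eval_pow, eval_X] at hc
  have hc0 : c ≠ 0 := by rintro rfl; simp at hc
  have hcμ : c + c⁻¹ = μ := by field_simp; linear_combination hc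
  have hfactor : algebraMap 𝕜 A μ - (↑u + ↑u⁻¹) =
      -(↑u⁻¹ * ((algebraMap 𝕜 A c - u) * (algebraMap 𝕜 A c⁻¹ - u))) := by
    rw [← hcμ]
    simp only [Algebra.algebraMap_eq_smul_one, sub_mul, mul_sub, smul_mul_assoc, mul_smul_comm,
      one_mul, mul_one, smul_sub, smul_smul, inv_mul_cancel₀ hc0, one_smul,
      Units.inv_mul_cancel_left, add_smul, Units.inv_mul]
    abel
  by_contra! h
  rw [spectrum.mem_iff, hfactor, IsUnit.neg_iff] at hμ
  refine hμ (u⁻¹.isUnit.mul ((spectrum.notMem_iff.mp ?_).mul (spectrum.notMem_iff.mp ?_)))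
  · exact fun hc ↦ h c hc hcμ
  · exact fun hc ↦ h c⁻¹ hc (by rwa [inv_inv, add_comm])

namespace Matrix

theorem conjTranspose_map_ofReal {m n : Type*} (R : Matrix m n ℝ) :
    (R.map Complex.ofReal)ᴴ = Rᵀ.map Complex.ofReal := by
  ext i j
  simp

variable {n : Type*} [Fintype n]

theorem map_inv [DecidableEq n] {K L : Type*} [Field K] [Field L] (f : K →+* L)
    (A : Matrix n n K) : A⁻¹.map f = (A.map f)⁻¹ := by
  have hadj := f.map_adjugate A
  have hdet := f.map_det A
  simp only [RingHom.mapMatrix_apply] at hadj hdet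
  rw [inv_def, inv_def, ← hadj, ← hdet, Ring.inverse_eq_inv', Ring.inverse_eq_inv', ← map_inv₀]
  ext i j
  simp

theorem star_dotProduct_conjTranspose_mulVec {α : Type*} [CommRing α] [StarRing α]
    (A : Matrix n n α) (w : n → α) :
    star w ⬝ᵥ Aᴴ *ᵥ w = star (star w ⬝ᵥ A *ᵥ w) := by
  rw [← star_dotProduct, star_mulVec, dotProduct_mulVec]

section PosHermitianPart

variable {A : Matrix n n ℂ}

theorem isUnit_of_forall_re_star_dotProduct_mulVec_pos [DecidableEq n]
    (hA : ∀ w ≠ 0, 0 < (star w ⬝ᵥ A *ᵥ w).re) : IsUnit A := by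
  rw [isUnit_iff_isUnit_det, isUnit_iff_ne_zero]
  intro hdet
  obtain ⟨w, hw, hAw⟩ := exists_mulVec_eq_zero_iff.mpr hdet
  simpa [hAw] using hA w hw

theorem forall_re_star_dotProduct_conjTranspose_mulVec_pos
    (hA : ∀ w ≠ 0, 0 < (star w ⬝ᵥ A *ᵥ w).re) :
    ∀ w ≠ 0, 0 < (star w ⬝ᵥ Aᴴ *ᵥ w).re := by
  intro w hw
  rw [star_dotProduct_conjTranspose_mulVec, Complex.star_def, Complex.conj_re]
  exact hA w hw

theorem norm_eq_one_of_mulVec_eq_smul_conjTranspose_mulVec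
    (hA : ∀ w ≠ 0, 0 < (star w ⬝ᵥ A *ᵥ w).re) {c : ℂ} {w : n → ℂ}
    (hw : w ≠ 0) (hc : A *ᵥ w = c • Aᴴ *ᵥ w) : ‖c‖ = 1 := by
  have hz : star w ⬝ᵥ A *ᵥ w ≠ 0 := fun h ↦ by simpa [h] using hA w hw
  set z := star w ⬝ᵥ A *ᵥ w
  have hzc : z = c * conj z := by
    rw [← Complex.star_def, ← star_dotProduct_conjTranspose_mulVec, ← smul_eq_mul,
      ← dotProduct_smul, ← hc]
  have hnorm : ‖c‖ * ‖z‖ = ‖z‖ := by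
    conv_rhs => rw [hzc, norm_mul, Complex.norm_conj]
  exact (mul_eq_right₀ (norm_ne_zero_iff.mpr hz)).mp hnorm

theorem norm_eq_one_of_mem_spectrum_mul_conjTranspose_inv [DecidableEq n]
    (hA : ∀ w ≠ 0, 0 < (star w ⬝ᵥ A *ᵥ w).re) {c : ℂ}
    (hc : c ∈ spectrum ℂ (A * Aᴴ⁻¹)) : ‖c‖ = 1 := by
  have hAH := isUnit_of_forall_re_star_dotProduct_mulVec_pos
    (forall_re_star_dotProduct_conjTranspose_mulVec_pos hA)
  rw [← spectrum_toLin', ← Module.End.hasEigenvalue_iff_mem_spectrum] at hc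
  obtain ⟨v, hv⟩ := hc.exists_hasEigenvector
  have hv_eq : A *ᵥ Aᴴ⁻¹ *ᵥ v = c • v := by
    rw [mulVec_mulVec, ← toLin'_apply, hv.apply_eq_smul]
  have hAHv : Aᴴ *ᵥ Aᴴ⁻¹ *ᵥ v = v := by
    rw [mulVec_mulVec, mul_nonsing_inv _ ((isUnit_iff_isUnit_det _).mp hAH), one_mulVec]
  refine norm_eq_one_of_mulVec_eq_smul_conjTranspose_mulVec hA (w := Aᴴ⁻¹ *ᵥ v) ?_ ?_
  · rintro h
    exact hv.2 (by rw [← hAHv, h, mulVec_zero])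
  · rw [hAHv, hv_eq]

end PosHermitianPart

theorem re_star_dotProduct_map_ofReal_mulVec (R : Matrix n n ℝ) (w : n → ℂ) :
    (star w ⬝ᵥ R.map Complex.ofReal *ᵥ w).re =
      (fun i ↦ (w i).re) ⬝ᵥ R *ᵥ (fun i ↦ (w i).re) +
        (fun i ↦ (w i).im) ⬝ᵥ R *ᵥ (fun i ↦ (w i).im) := by
  simp only [dotProduct, mulVec, Complex.re_sum, Finset.mul_sum, ← Finset.sum_add_distrib]
  refine Finset.sum_congr rfl fun i _ ↦ Finset.sum_congr rfl fun j _ ↦ ?_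
  simp

theorem forall_re_star_dotProduct_map_ofReal_mulVec_pos {R : Matrix n n ℝ}
    (hR : ∀ x : n → ℝ, x ≠ 0 → 0 < x ⬝ᵥ R *ᵥ x) :
    ∀ w ≠ 0, 0 < (star w ⬝ᵥ R.map Complex.ofReal *ᵥ w).re := by
  have hR' (x : n → ℝ) : 0 ≤ x ⬝ᵥ R *ᵥ x := by
    rcases eq_or_ne x 0 with rfl | hx
    · simp
    · exact (hR x hx).le
  intro w hw
  rw [re_star_dotProduct_map_ofReal_mulVec]
  by_cases hre : (fun i ↦ (w i).re) = 0
  · have him : (fun i ↦ (w i).im) ≠ 0 := fun him ↦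
      hw (funext fun i ↦ Complex.ext (congrFun hre i) (congrFun him i))
    linarith [hR _ him, hR' fun i ↦ (w i).re]
  · linarith [hR _ hre, hR' fun i ↦ (w i).im]

end Matrix

/-- If the symmetric part of `R` is positive definite (`xᵀRx > 0` for nonzero `x`), then
every complex eigenvalue of `R·R⁻ᵀ + Rᵀ·R⁻¹` is real and lies in `[-2, 2]`. -/
theorem eigenvalues_RRinvT_in_interval
    (n : ℕ) (R : Matrix (Fin n) (Fin n) ℝ)
    (hR : ∀ x : Fin n → ℝ, x ≠ 0 → 0 < x ⬝ᵥ (R *ᵥ x)) :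
    ∀ μ ∈ spectrum ℂ ((R * (Rᵀ)⁻¹ + Rᵀ * R⁻¹).map (Complex.ofReal)),
      μ.im = 0 ∧ -2 ≤ μ.re ∧ μ.re ≤ 2 := by
  intro μ hμ
  set A := R.map Complex.ofReal
  have hA := forall_re_star_dotProduct_map_ofReal_mulVec_pos hR
  have hAH : IsUnit Aᴴ := isUnit_of_forall_re_star_dotProduct_mulVec_pos
    (forall_re_star_dotProduct_conjTranspose_mulVec_pos hA)
  have hU : IsUnit (A * Aᴴ⁻¹) :=
    (isUnit_of_forall_re_star_dotProduct_mulVec_pos hA).mul (isUnit_nonsing_inv_iff.mpr hAH)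
  have hM : (R * Rᵀ⁻¹ + Rᵀ * R⁻¹).map Complex.ofReal =
      (↑hU.unit + ↑hU.unit⁻¹ : Matrix (Fin n) (Fin n) ℂ) := by
    rw [coe_units_inv, IsUnit.unit_spec, Matrix.mul_inv_rev,
      nonsing_inv_nonsing_inv _ ((isUnit_iff_isUnit_det _).mp hAH)]
    change Complex.ofRealHom.mapMatrix _ = _
    simp only [map_add, map_mul, RingHom.mapMatrix_apply, Matrix.map_inv]
    rw [conjTranspose_map_ofReal]
    rfl
  rw [hM] at hμ
  obtain ⟨c, hc, rfl⟩ := spectrum.exists_add_inv_eq_of_mem_add_inv hU.unit hμ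
  have hc1 := norm_eq_one_of_mem_spectrum_mul_conjTranspose_inv hA hc
  rw [Complex.inv_eq_conj hc1, Complex.add_conj]
  have := abs_le.mp (hc1 ▸ Complex.abs_re_le_norm c)
  simp only [Complex.ofReal_im, Complex.ofReal_re]
  exact ⟨trivial, by linarith, by linarith⟩
end

section
/- Let R be an n×n real matrix whose symmetric part S = (R + Rᵀ)/2 is positive definite, and let v ∈ ℝⁿ be nonzero. Define P₀ = vᵀ R⁻¹ v and P₁ = vᵀ S⁻¹ v, and let K = (R·R⁻ᵀ + Rᵀ·R⁻¹)/4, whose eigenvalues are real. Then P₁ > 0 and 0 ≤ 1/2 + λ_min(K) ≤ P₀/P₁ ≤ 1/2 + λ_max(K) ≤ 1, where λ_min(K) and λ_max(K) denote the smallest and largest (real) eigenvalues of K. -/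
/-!
Write `S` for the symmetric part of `R` and `H = (R⁻¹ + R⁻ᵀ)/2 = R⁻ᵀ S R⁻¹` for that of `R⁻¹`.
Then `P₀ = vᵀHv`, `P₁ = vᵀS⁻¹v` and `S H = 1/2 + K`. Conjugating by `√S` turns `S H` into the
symmetric matrix `√S H √S` with the same spectrum, and turns `c S⁻¹ ≤ H` (Loewner order) into
`c ≤ √S H √S`; so the extreme eigenvalues of `S H` bound the generalized Rayleigh quotient
`vᵀHv / vᵀS⁻¹v`. Finally `0 ≤ H ≤ S⁻¹`, the second because
`RᵀS⁻¹R - S = (R - S)ᵀ S⁻¹ (R - S)`, so the spectrum of `S H` lies in `[0, 1]`.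
-/

open Matrix
open scoped MatrixOrder

lemma IsUnit.star_left_conjugate_le_conjugate_iff {R : Type*} [Ring R] [PartialOrder R]
    [StarRing R] [StarOrderedRing R] {u a b : R} (hu : IsUnit u) :
    star u * a * u ≤ star u * b * u ↔ a ≤ b := by
  rw [← sub_nonneg, ← sub_mul, ← mul_sub, hu.star_left_conjugate_nonneg_iff, sub_nonneg]

namespace Matrix

variable {ι : Type*}

noncomputable def symmPart (A : Matrix ι ι ℝ) : Matrix ι ι ℝ := (2 : ℝ)⁻¹ • (A + Aᵀ)

lemma isHermitian_symmPart (A : Matrix ι ι ℝ) : (symmPart A).IsHermitian := by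
  simp [IsHermitian, symmPart, add_comm]

variable [Fintype ι]

lemma dotProduct_symmPart_mulVec (A : Matrix ι ι ℝ) (x : ι → ℝ) :
    x ⬝ᵥ (symmPart A *ᵥ x) = x ⬝ᵥ (A *ᵥ x) := by
  rw [symmPart, smul_mulVec, add_mulVec, dotProduct_smul, dotProduct_add,
    dotProduct_transpose_mulVec, smul_eq_mul]
  ring

lemma posDef_symmPart_iff {A : Matrix ι ι ℝ} :
    (symmPart A).PosDef ↔ ∀ x, x ≠ 0 → 0 < x ⬝ᵥ (A *ᵥ x) := by
  simp only [posDef_iff_dotProduct_mulVec, isHermitian_symmPart, star_trivial,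
    dotProduct_symmPart_mulVec, true_and]

lemma dotProduct_mulVec_le_dotProduct_mulVec {X Y : Matrix ι ι ℝ} (h : X ≤ Y) (v : ι → ℝ) :
    v ⬝ᵥ (X *ᵥ v) ≤ v ⬝ᵥ (Y *ᵥ v) := by
  simpa [sub_mulVec] using (le_iff.1 h).dotProduct_mulVec_nonneg v

variable [DecidableEq ι] {A : Matrix ι ι ℝ}

lemma isUnit_of_posDef_symmPart (hA : (symmPart A).PosDef) : IsUnit A := by
  rw [isUnit_iff_isUnit_det, isUnit_iff_ne_zero, Ne, ← exists_mulVec_eq_zero_iff]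
  rintro ⟨x, hx, hAx⟩
  simpa [hAx] using posDef_symmPart_iff.1 hA x hx

lemma symmPart_inv (hA : IsUnit A) : symmPart A⁻¹ = A⁻¹ᵀ * symmPart A * A⁻¹ := by
  have hA' : IsUnit A.det := (isUnit_iff_isUnit_det A).1 hA
  have hAinvT : A⁻¹ᵀ * Aᵀ = 1 := by rw [← transpose_mul, mul_nonsing_inv A hA', transpose_one]
  rw [symmPart, symmPart, Matrix.mul_smul, Matrix.smul_mul, Matrix.mul_add, Matrix.add_mul,
    hAinvT, Matrix.one_mul, Matrix.mul_assoc, mul_nonsing_inv A hA', Matrix.mul_one, add_comm]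

lemma symmPart_mul_symmPart_inv (hA : IsUnit A) :
    symmPart A * symmPart A⁻¹ =
      algebraMap ℝ (Matrix ι ι ℝ) 2⁻¹ + (4 : ℝ)⁻¹ • (A * Aᵀ⁻¹ + Aᵀ * A⁻¹) := by
  have hA' : IsUnit A.det := (isUnit_iff_isUnit_det A).1 hA
  rw [symmPart, symmPart, smul_mul_smul_comm, add_mul, mul_add, mul_add, mul_nonsing_inv A hA',
    ← transpose_nonsing_inv, ← transpose_mul, nonsing_inv_mul A hA', transpose_one,
    Algebra.algebraMap_eq_smul_one]
  module

lemma mem_spectrum_symmPart_mul_symmPart_inv_iff (hA : IsUnit A) (μ : ℝ) :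
    μ ∈ spectrum ℝ (symmPart A * symmPart A⁻¹) ↔
      μ - 1 / 2 ∈ spectrum ℝ ((4 : ℝ)⁻¹ • (A * Aᵀ⁻¹ + Aᵀ * A⁻¹)) := by
  rw [symmPart_mul_symmPart_inv hA]
  conv_lhs => rw [show μ = μ - 1 / 2 + (2 : ℝ)⁻¹ by ring]
  exact spectrum.add_mem_add_iff

lemma posDef_symmPart_inv (hA : (symmPart A).PosDef) : (symmPart A⁻¹).PosDef := by
  have hA' := isUnit_of_posDef_symmPart hA
  rw [symmPart_inv hA', ← conjTranspose_eq_transpose_of_trivial]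
  exact hA.conjTranspose_mul_mul_same (mulVec_injective_iff_isUnit.2 (isUnit_nonsing_inv_iff.2 hA'))

lemma symmPart_le_transpose_mul_inv_symmPart_mul (hA : (symmPart A).PosDef) :
    symmPart A ≤ Aᵀ * (symmPart A)⁻¹ * A := by
  set S := symmPart A with hSdef
  have hS' : IsUnit S.det := (isUnit_iff_isUnit_det S).1 hA.isUnit
  have hSt : Sᵀ = S := by simpa [IsHermitian] using isHermitian_symmPart A
  have hsum : A + Aᵀ = (2 : ℝ) • S := by rw [hSdef, symmPart, smul_smul]; norm_num
  have hsq : (A - S)ᴴ * S⁻¹ * (A - S) = Aᵀ * S⁻¹ * A - S :=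
    calc (A - S)ᴴ * S⁻¹ * (A - S)
        = Aᵀ * S⁻¹ * A - Aᵀ * (S⁻¹ * S) - (S * S⁻¹) * A + (S * S⁻¹) * S := by
          rw [conjTranspose_eq_transpose_of_trivial, transpose_sub, hSt]; noncomm_ring
      _ = Aᵀ * S⁻¹ * A - (A + Aᵀ) + S := by
          rw [nonsing_inv_mul S hS', mul_nonsing_inv S hS']; noncomm_ring
      _ = Aᵀ * S⁻¹ * A - S := by rw [hsum]; module
  rw [le_iff, ← hsq]
  exact hA.inv.posSemidef.conjTranspose_mul_mul_same _

lemma symmPart_inv_le_inv_symmPart (hA : (symmPart A).PosDef) :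
    symmPart A⁻¹ ≤ (symmPart A)⁻¹ := by
  have hA' : IsUnit A.det := (isUnit_iff_isUnit_det A).1 (isUnit_of_posDef_symmPart hA)
  have h := star_left_conjugate_le_conjugate (symmPart_le_transpose_mul_inv_symmPart_mul hA) A⁻¹
  have hAinvT : A⁻¹ᵀ * Aᵀ = 1 := by rw [← transpose_mul, mul_nonsing_inv A hA', transpose_one]
  rwa [star_eq_conjTranspose, conjTranspose_eq_transpose_of_trivial,
    ← symmPart_inv (isUnit_of_posDef_symmPart hA), Matrix.mul_assoc, Matrix.mul_assoc,
    mul_nonsing_inv A hA', Matrix.mul_one, ← Matrix.mul_assoc, hAinvT, Matrix.one_mul] at h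

variable {S : Matrix ι ι ℝ}

lemma spectrum_mul_eq_spectrum_sqrt_mul_mul_sqrt (hS : S.PosDef) (H : Matrix ι ι ℝ) :
    spectrum ℝ (S * H) = spectrum ℝ (CFC.sqrt S * H * CFC.sqrt S) := by
  obtain ⟨u, hu⟩ := hS.isStrictlyPositive.isUnit_cfcSqrt
  rw [← spectrum.units_conjugate (a := CFC.sqrt S * H * CFC.sqrt S) (u := u)]
  conv_lhs => rw [← CFC.sqrt_mul_sqrt_self S hS.posSemidef.nonneg]
  simp [← hu, mul_assoc]

lemma le_iff_sqrt_mul_mul_sqrt_le (hS : S.PosDef) {X Y : Matrix ι ι ℝ} :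
    X ≤ Y ↔ CFC.sqrt S * X * CFC.sqrt S ≤ CFC.sqrt S * Y * CFC.sqrt S := by
  have hB : star (CFC.sqrt S) = CFC.sqrt S := (CFC.sqrt_nonneg S).isSelfAdjoint
  rw [← hS.isStrictlyPositive.isUnit_cfcSqrt.star_left_conjugate_le_conjugate_iff, hB]

lemma sqrt_mul_inv_mul_sqrt (hS : S.PosDef) : CFC.sqrt S * S⁻¹ * CFC.sqrt S = 1 := by
  have hB : IsUnit (CFC.sqrt S).det :=
    (isUnit_iff_isUnit_det _).1 hS.isStrictlyPositive.isUnit_cfcSqrt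
  rw [show S⁻¹ = (CFC.sqrt S * CFC.sqrt S)⁻¹ by rw [CFC.sqrt_mul_sqrt_self S hS.posSemidef.nonneg],
    mul_inv_rev, Matrix.mul_assoc, Matrix.mul_assoc, nonsing_inv_mul _ hB, Matrix.mul_one,
    mul_nonsing_inv _ hB]

lemma isSelfAdjoint_sqrt_mul_mul_sqrt {H : Matrix ι ι ℝ} (hH : H.IsHermitian) :
    IsSelfAdjoint (CFC.sqrt S * H * CFC.sqrt S) :=
  IsSelfAdjoint.conjugate_self hH (CFC.sqrt_nonneg S).isSelfAdjoint

lemma smul_inv_le_iff_le_spectrum_mul (hS : S.PosDef) {H : Matrix ι ι ℝ} (hH : H.IsHermitian)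
    (c : ℝ) : c • S⁻¹ ≤ H ↔ ∀ μ ∈ spectrum ℝ (S * H), c ≤ μ := by
  rw [le_iff_sqrt_mul_mul_sqrt_le hS, Matrix.mul_smul, Matrix.smul_mul, sqrt_mul_inv_mul_sqrt hS,
    ← Algebra.algebraMap_eq_smul_one, spectrum_mul_eq_spectrum_sqrt_mul_mul_sqrt hS,
    algebraMap_le_iff_le_spectrum (isSelfAdjoint_sqrt_mul_mul_sqrt hH)]

lemma le_smul_inv_iff_spectrum_mul_le (hS : S.PosDef) {H : Matrix ι ι ℝ} (hH : H.IsHermitian)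
    (c : ℝ) : H ≤ c • S⁻¹ ↔ ∀ μ ∈ spectrum ℝ (S * H), μ ≤ c := by
  rw [le_iff_sqrt_mul_mul_sqrt_le hS, Matrix.mul_smul, Matrix.smul_mul, sqrt_mul_inv_mul_sqrt hS,
    ← Algebra.algebraMap_eq_smul_one, spectrum_mul_eq_spectrum_sqrt_mul_mul_sqrt hS,
    le_algebraMap_iff_spectrum_le (isSelfAdjoint_sqrt_mul_mul_sqrt hH)]

end Matrix

/-- Theorem 3 (profit ratio bounds): with `P₀ = vᵀR⁻¹v`, `P₁ = vᵀS⁻¹v` for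
`S = (R + Rᵀ)/2` positive definite, and `K = (RR⁻ᵀ + RᵀR⁻¹)/4`, one has `P₁ > 0` and
`0 ≤ 1/2 + λ_min(K) ≤ P₀/P₁ ≤ 1/2 + λ_max(K) ≤ 1`. -/
theorem profit_ratio_bounds
    (n : ℕ) (R : Matrix (Fin n) (Fin n) ℝ)
    (hR : ∀ x : Fin n → ℝ, x ≠ 0 → 0 < x ⬝ᵥ (R *ᵥ x))
    (v : Fin n → ℝ) (hv : v ≠ 0)
    (P₀ P₁ : ℝ)
    (hP0 : P₀ = v ⬝ᵥ (R⁻¹ *ᵥ v))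
    (hP1 : P₁ = v ⬝ᵥ (((2:ℝ)⁻¹ • (R + Rᵀ))⁻¹ *ᵥ v))
    (K : Matrix (Fin n) (Fin n) ℝ)
    (hK : K = (4:ℝ)⁻¹ • (R * (Rᵀ)⁻¹ + Rᵀ * R⁻¹))
    (lmin lmax : ℝ)
    (hmin : IsLeast (spectrum ℝ K) lmin)
    (hmax : IsGreatest (spectrum ℝ K) lmax) :
    0 < P₁ ∧ 0 ≤ 1/2 + lmin ∧ 1/2 + lmin ≤ P₀ / P₁ ∧
      P₀ / P₁ ≤ 1/2 + lmax ∧ 1/2 + lmax ≤ 1 := by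
  change P₁ = v ⬝ᵥ ((symmPart R)⁻¹ *ᵥ v) at hP1
  rw [← dotProduct_symmPart_mulVec] at hP0
  have hS : (symmPart R).PosDef := posDef_symmPart_iff.2 hR
  have hH : (symmPart R⁻¹).IsHermitian := isHermitian_symmPart _
  have hSH := mem_spectrum_symmPart_mul_symmPart_inv_iff (isUnit_of_posDef_symmPart hS)
  rw [← hK] at hSH
  have hP₁ : 0 < P₁ := by simpa [hP1] using hS.inv.dotProduct_mulVec_pos hv
  have hlow : (1/2 + lmin) • (symmPart R)⁻¹ ≤ symmPart R⁻¹ :=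
    (smul_inv_le_iff_le_spectrum_mul hS hH _).2 fun μ hμ => by linarith [hmin.2 ((hSH μ).1 hμ)]
  have hup : symmPart R⁻¹ ≤ (1/2 + lmax) • (symmPart R)⁻¹ :=
    (le_smul_inv_iff_spectrum_mul_le hS hH _).2 fun μ hμ => by linarith [hmax.2 ((hSH μ).1 hμ)]
  have hlow' := dotProduct_mulVec_le_dotProduct_mulVec hlow v
  have hup' := dotProduct_mulVec_le_dotProduct_mulVec hup v
  simp only [smul_mulVec, dotProduct_smul, smul_eq_mul, ← hP0, ← hP1] at hlow' hup'
  refine ⟨hP₁, ?_, (le_div_iff₀ hP₁).2 hlow', (div_le_iff₀ hP₁).2 hup', ?_⟩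
  · refine (smul_inv_le_iff_le_spectrum_mul hS hH 0).1 ?_ _ (by simpa [hSH] using hmin.1)
    simpa using (posDef_symmPart_inv hS).posSemidef.nonneg
  · refine (le_smul_inv_iff_spectrum_mul_le hS hH 1).1 ?_ _ (by simpa [hSH] using hmax.1)
    simpa using symmPart_inv_le_inv_symmPart hS
end

section
/- Let n ≥ 2 and let W be an n×n real symmetric matrix with all entries satisfying 0 < W_{ij} < 1, and let γ be a real number with γ > 4·max{ ρ(W), (∑_{i,j} W_{ij}) / (min_{i,j} W_{ij}) }, where ρ(W) is the spectral radius of W. Then W + γI is invertible, every off-diagonal entry of (W + γI)⁻¹ is negative, and every entry of the vector (W + γI)⁻¹·1 (where 1 is the all-ones vector) is at least 2/(3γ) > 0. -/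
/-!
Put `B = (W + γ • 1)⁻¹`, so that `γ • B = 1 - B * W`. In the `ℓ∞` operator norm this gives
`‖B‖ * (γ - ‖W‖) ≤ 1`, and `‖W‖ ≤ ∑ᵢⱼ Wᵢⱼ < γ m / 4`, whence `‖B‖ * ‖W‖ ≤ m / 3 < 1 / 3`.
Then `γ • (B *ᵥ 1) = 1 - B *ᵥ (W *ᵥ 1)` stays within `1 / 3` of `1`, and iterating once more,
`γ ^ 2 • B = γ • 1 - W + B * W * W`, whose off-diagonal entries are `-Wᵢⱼ ≤ -m` up to an error
of at most `‖B‖ * ‖W‖ < m` (the columns of `W` have entries below `1`).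
-/

open Matrix

open scoped Matrix.Norms.Operator

theorem Pi.norm_one_le_one {ι R : Type*} [Fintype ι] [SeminormedRing R] [NormOneClass R] :
    ‖(1 : ι → R)‖ ≤ 1 :=
  (pi_norm_le_iff_of_nonneg zero_le_one).mpr fun _ => (norm_one (α := R)).le

namespace Matrix

theorem linfty_opNorm_le_sum_sum_norm {m n α : Type*} [Fintype m] [Fintype n]
    [SeminormedAddCommGroup α] (A : Matrix m n α) : ‖A‖ ≤ ∑ i, ∑ j, ‖A i j‖ := by
  have : ‖A‖₊ ≤ ∑ i, ∑ j, ‖A i j‖₊ := by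
    rw [linfty_opNNNorm_def]
    exact Finset.sup_le fun i _ =>
      Finset.single_le_sum (f := fun i => ∑ j, ‖A i j‖₊) (fun _ _ => by positivity)
        (Finset.mem_univ i)
  simpa only [← coe_nnnorm, NNReal.coe_sum] using NNReal.coe_le_coe.mpr this

theorem abs_mulVec_mulVec_apply_le {l m n : Type*} [Fintype l] [Fintype m] [Fintype n]
    (B : Matrix l m ℝ) (W : Matrix m n ℝ) (v : n → ℝ) (i : l) :
    |(B *ᵥ (W *ᵥ v)) i| ≤ ‖B‖ * ‖W‖ * ‖v‖ :=
  calc |(B *ᵥ (W *ᵥ v)) i| ≤ ‖B *ᵥ (W *ᵥ v)‖ :=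
        (Real.norm_eq_abs _).symm.trans_le (norm_le_pi_norm _ i)
    _ ≤ ‖B‖ * ‖W *ᵥ v‖ := linfty_opNorm_mulVec _ _
    _ ≤ ‖B‖ * (‖W‖ * ‖v‖) := by gcongr; exact linfty_opNorm_mulVec _ _
    _ = _ := (mul_assoc _ _ _).symm

variable {ι : Type*} [Fintype ι] [DecidableEq ι]

theorem smul_inv_add_smul_one {R : Type*} [CommRing R] {W : Matrix ι ι R} {γ : R}
    (h : IsUnit (W + γ • 1)) : γ • (W + γ • 1)⁻¹ = 1 - (W + γ • 1)⁻¹ * W := by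
  have := nonsing_inv_mul _ ((isUnit_iff_isUnit_det _).mp h)
  rw [mul_add, mul_smul_comm, mul_one] at this
  exact eq_sub_of_add_eq' this

variable {W : Matrix ι ι ℝ} {γ : ℝ}

theorem isUnit_add_smul_one_of_norm_lt (h : ‖W‖ < γ) : IsUnit (W + γ • 1) := by
  rw [isUnit_iff_isUnit_det, isUnit_iff_ne_zero, Ne, ← exists_mulVec_eq_zero_iff]
  rintro ⟨v, hv, hWv⟩
  have hγv : γ • v = -(W *ᵥ v) := by
    rw [add_mulVec, smul_mulVec, one_mulVec] at hWv
    exact eq_neg_of_add_eq_zero_right hWv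
  have : γ * ‖v‖ ≤ ‖W‖ * ‖v‖ := by
    calc γ * ‖v‖ = ‖γ • v‖ := by
          rw [norm_smul, Real.norm_of_nonneg ((norm_nonneg W).trans h.le)]
      _ = ‖W *ᵥ v‖ := by rw [hγv, norm_neg]
      _ ≤ ‖W‖ * ‖v‖ := linfty_opNorm_mulVec _ _
  exact hv (norm_eq_zero.mp (by nlinarith [norm_nonneg v]))

theorem norm_inv_add_smul_one_mul_sub_le (h : ‖W‖ < γ) :
    ‖(W + γ • 1)⁻¹‖ * (γ - ‖W‖) ≤ 1 := by
  set B := (W + γ • 1)⁻¹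
  have hγ : 0 ≤ γ := (norm_nonneg W).trans h.le
  have : γ * ‖B‖ ≤ 1 + ‖B‖ * ‖W‖ :=
    calc γ * ‖B‖ = ‖γ • B‖ := by rw [norm_smul, Real.norm_of_nonneg hγ]
      _ = ‖1 - B * W‖ := by rw [smul_inv_add_smul_one (isUnit_add_smul_one_of_norm_lt h)]
      _ ≤ ‖(1 : Matrix ι ι ℝ)‖ + ‖B * W‖ := norm_sub_le _ _
      _ ≤ 1 + ‖B‖ * ‖W‖ := by
        gcongr
        · rw [← diagonal_one, linfty_opNorm_diagonal]
          exact Pi.norm_one_le_one (R := ℝ)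
        · exact linfty_opNorm_mul _ _
  linarith

theorem abs_mul_inv_add_smul_one_mulVec_one_sub_one_le (h : IsUnit (W + γ • 1)) (i : ι) :
    |γ * ((W + γ • 1)⁻¹ *ᵥ 1) i - 1| ≤ ‖(W + γ • 1)⁻¹‖ * ‖W‖ := by
  set B := (W + γ • 1)⁻¹
  have hrow : γ * (B *ᵥ 1) i - 1 = -(B *ᵥ (W *ᵥ 1)) i := by
    have := congrFun (congrArg (· *ᵥ (1 : ι → ℝ)) (smul_inv_add_smul_one h)) i
    simp only [smul_mulVec, sub_mulVec, one_mulVec, ← mulVec_mulVec, Pi.smul_apply,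
      Pi.sub_apply, smul_eq_mul] at this
    rw [this, Pi.one_apply]
    ring
  calc |γ * (B *ᵥ 1) i - 1| = |(B *ᵥ (W *ᵥ 1)) i| := by rw [hrow, abs_neg]
    _ ≤ ‖B‖ * ‖W‖ * ‖(1 : ι → ℝ)‖ := abs_mulVec_mulVec_apply_le _ _ _ _
    _ ≤ ‖B‖ * ‖W‖ := mul_le_of_le_one_right (by positivity) Pi.norm_one_le_one

theorem abs_sq_mul_inv_add_smul_one_apply_add_le (h : IsUnit (W + γ • 1)) {i j : ι}
    (hij : i ≠ j) :
    |γ ^ 2 * (W + γ • 1)⁻¹ i j + W i j| ≤ ‖(W + γ • 1)⁻¹‖ * ‖W‖ * ‖fun k => W k j‖ := by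
  set B := (W + γ • 1)⁻¹
  have hsq : γ ^ 2 • B = γ • 1 - W + B * (W * W) := by
    rw [pow_two, mul_smul, smul_inv_add_smul_one h, smul_sub, ← smul_mul_assoc,
      smul_inv_add_smul_one h, sub_mul, one_mul, mul_assoc]
    abel
  have hij' := congrFun₂ hsq i j
  simp only [smul_apply, smul_eq_mul, sub_apply, add_apply, one_apply_ne hij, mul_zero,
    zero_sub] at hij'
  have hcol : (B * (W * W)) i j = (B *ᵥ (W *ᵥ fun k => W k j)) i := rfl
  rw [hij', hcol, neg_add_cancel_comm]
  exact abs_mulVec_mulVec_apply_le _ _ _ _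

end Matrix

theorem binary_pricing_reduction_matrix_general
    (n : ℕ) (W : Matrix (Fin n) (Fin n) ℝ)
    (hW : ∀ i j, 0 < W i j ∧ W i j < 1)
    (ρ m γ : ℝ)
    (hm : IsLeast {r : ℝ | ∃ i j, W i j = r} m)
    (hγ : γ > 4 * max ρ ((∑ i, ∑ j, W i j) / m)) :
    IsUnit (W + γ • (1 : Matrix (Fin n) (Fin n) ℝ)) ∧
    (∀ i j, i ≠ j → (W + γ • (1 : Matrix (Fin n) (Fin n) ℝ))⁻¹ i j < 0) ∧
    (∀ i, ((W + γ • (1 : Matrix (Fin n) (Fin n) ℝ))⁻¹ *ᵥ (1 : Fin n → ℝ)) i ≥ 2 / (3 * γ)) ∧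
    0 < 2 / (3 * γ) := by
  obtain ⟨⟨i₀, j₀, rfl⟩, hm_le⟩ := hm
  set m := W i₀ j₀
  obtain ⟨hm0, hm1⟩ : 0 < m ∧ m < 1 := hW i₀ j₀
  have hnorm : ‖W‖ ≤ ∑ i, ∑ j, W i j := by
    simpa only [Real.norm_of_nonneg (hW _ _).1.le] using W.linfty_opNorm_le_sum_sum_norm
  have hγm : 4 * ‖W‖ < γ * m := by
    have h : 4 * ((∑ i, ∑ j, W i j) / m) < γ :=
      lt_of_le_of_lt (by gcongr; exact le_max_right _ _) hγ
    rw [← mul_div_assoc, div_lt_iff₀ hm0] at h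
    linarith
  have hγ0 : 0 < γ :=
    pos_of_mul_pos_left ((by positivity : (0 : ℝ) ≤ 4 * ‖W‖).trans_lt hγm) hm0.le
  have hWγ : ‖W‖ < γ := by nlinarith [norm_nonneg W]
  have hunit := isUnit_add_smul_one_of_norm_lt hWγ
  set B := (W + γ • (1 : Matrix (Fin n) (Fin n) ℝ))⁻¹
  have hε : ‖B‖ * ‖W‖ ≤ m / 3 :=
    calc ‖B‖ * ‖W‖ = ‖B‖ * (3 * ‖W‖) / 3 := by ring
      _ ≤ ‖B‖ * (m * (γ - ‖W‖)) / 3 := by gcongr ‖B‖ * ?_ / 3; nlinarith [norm_nonneg W]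
      _ = m * (‖B‖ * (γ - ‖W‖)) / 3 := by ring
      _ ≤ m / 3 := by
        gcongr ?_ / 3
        exact mul_le_of_le_one_right hm0.le (norm_inv_add_smul_one_mul_sub_le hWγ)
  refine ⟨hunit, fun i j hij => ?_, fun i => ?_, by positivity⟩
  · have hcol : ‖fun k => W k j‖ ≤ 1 :=
      (pi_norm_le_iff_of_nonneg zero_le_one).mpr fun k => by
        rw [Real.norm_of_nonneg (hW k j).1.le]; exact (hW k j).2.le
    have herr := (abs_le.mp (abs_sq_mul_inv_add_smul_one_apply_add_le hunit hij)).2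
    have hεcol := mul_le_of_le_one_right (a := ‖B‖ * ‖W‖) (by positivity) hcol
    have hneg : γ ^ 2 * B i j < 0 := by linarith [hm_le ⟨i, j, rfl⟩]
    exact neg_of_mul_neg_right hneg (sq_nonneg γ)
  · have herr := (abs_le.mp (abs_mul_inv_add_smul_one_mulVec_one_sub_one_le hunit i)).1
    rw [ge_iff_le, div_le_iff₀ (by positivity)]
    linarith

/-- In the proof of Theorem 4: for symmetric `W` with entries in `(0,1)` and
`γ > 4·max{ρ(W), (∑ᵢⱼ Wᵢⱼ)/minᵢⱼ Wᵢⱼ}`, the matrix `W + γI` is invertible, the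
off-diagonal entries of `(W + γI)⁻¹` are negative, and each entry of `(W + γI)⁻¹·1`
is at least `2/(3γ) > 0`. -/
theorem binary_pricing_reduction_matrix
    (n : ℕ) (hn : 2 ≤ n) (W : Matrix (Fin n) (Fin n) ℝ) (hWs : W.IsSymm)
    (hW : ∀ i j, 0 < W i j ∧ W i j < 1)
    (ρ m γ : ℝ)
    (hρ : IsGreatest ((fun μ => |μ|) '' spectrum ℝ W) ρ)
    (hm : IsLeast {r : ℝ | ∃ i j, W i j = r} m)
    (hγ : γ > 4 * max ρ ((∑ i, ∑ j, W i j) / m)) :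
    IsUnit (W + γ • (1 : Matrix (Fin n) (Fin n) ℝ)) ∧
    (∀ i j, i ≠ j → (W + γ • (1 : Matrix (Fin n) (Fin n) ℝ))⁻¹ i j < 0) ∧
    (∀ i, ((W + γ • (1 : Matrix (Fin n) (Fin n) ℝ))⁻¹ *ᵥ (1 : Fin n → ℝ)) i ≥ 2 / (3 * γ)) ∧
    0 < 2 / (3 * γ) :=
  binary_pricing_reduction_matrix_general n W hW ρ m γ hm hγ
end

section
/- For every real number x with −1 ≤ x ≤ 1, it holds that arccos(x)/π ≥ (0.878/2)·(1 − x). -/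
lemma gw_sin_lb {x : ℝ} (hx : 0 ≤ x) : x - x ^ 3 / 6 ≤ Real.sin x := by
  have h : StrictMonoOn (fun y : ℝ => Real.sin y - (y - y ^ 3 / 6)) (Set.Ici 0) := by
    apply strictMonoOn_of_deriv_pos (convex_Ici 0)
    · exact (Real.continuous_sin.sub (by continuity)).continuousOn
    · intro y hy
      rw [interior_Ici] at hy
      have hd : HasDerivAt (fun y : ℝ => Real.sin y - (y - y ^ 3 / 6))
          (Real.cos y - (1 - (3 : ℕ) * y ^ (3 - 1) / 6)) y :=
        (Real.hasDerivAt_sin y).sub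
          ((hasDerivAt_id y).sub ((hasDerivAt_pow 3 y).div_const 6))
      rw [hd.deriv]
      have := Real.one_sub_sq_div_two_lt_cos (x := y) (ne_of_gt hy)
      push_cast
      nlinarith
  rcases eq_or_lt_of_le hx with rfl | hx'
  · simp
  · have := h (Set.self_mem_Ici) (Set.mem_Ici.2 hx) hx'
    simp only [Real.sin_zero] at this
    nlinarith

lemma gw_cos_ub {s : ℝ} (h0 : 0 ≤ s) (h2 : s ≤ 2) :
    Real.cos s ≤ 1 - s ^ 2 / 2 + s ^ 4 / 24 - s ^ 6 / 1152 := by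
  have hh : Real.sin (s / 2) ^ 2 = 1 / 2 - Real.cos s / 2 := by
    have := Real.sin_sq_eq_half_sub (s / 2)
    rw [mul_div_cancel₀ s (by norm_num : (2:ℝ) ≠ 0)] at this
    exact this
  have hs : s / 2 - (s / 2) ^ 3 / 6 ≤ Real.sin (s / 2) := gw_sin_lb (by linarith)
  have hcube : s ^ 3 ≤ 4 * s := by nlinarith [mul_nonneg (mul_nonneg h0 (sub_nonneg.2 h2)) (by linarith : (0:ℝ) ≤ 2 + s)]
  have hpos : 0 ≤ s / 2 - (s / 2) ^ 3 / 6 := by nlinarith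
  have hsq := pow_le_pow_left₀ hpos hs 2
  nlinarith [hsq, hh]

/-- The Goemans–Williamson analytic inequality: `arccos(x)/π ≥ (0.878/2)(1 - x)`
for all `x ∈ [-1, 1]`. -/
theorem arccos_ge_gw (x : ℝ) (h1 : -1 ≤ x) (h2 : x ≤ 1) :
    Real.arccos x / Real.pi ≥ (0.878 / 2) * (1 - x) := by
  have hπ := Real.pi_gt_d6
  have hπ' := Real.pi_lt_d6
  have ht0 : 0 ≤ Real.arccos x := Real.arccos_nonneg x
  have htp : Real.arccos x ≤ Real.pi := Real.arccos_le_pi x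
  have hct : Real.cos (Real.arccos x) = x := Real.cos_arccos h1 h2
  rw [ge_iff_le, le_div_iff₀ Real.pi_pos]
  set t := Real.arccos x with ht
  have hx1 : 0 ≤ 1 - x := by linarith
  have key : 0.439 * 3.141593 * (1 - Real.cos t) ≤ t := by
    rcases le_or_gt t 1.45 with h | h
    · have hc := Real.one_sub_sq_div_two_le_cos (x := t)
      nlinarith
    · set s := Real.pi - t with hsdef
      have hs0 : 0 ≤ s := by simp only [hsdef]; linarith
      have hs2 : s ≤ 1.691593 := by simp only [hsdef]; linarith
      have hcos : Real.cos s ≤ 1 - s ^ 2 / 2 + s ^ 4 / 24 - s ^ 6 / 1152 :=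
        gw_cos_ub hs0 (by linarith)
      have hts : t = Real.pi - s := by rw [hsdef]; ring
      rw [hts, Real.cos_pi_sub]
      have hps : 3.141592 - s ≤ Real.pi - s := by linarith
      have hmain : 0.439 * 3.141593 * (2 - s^2/2 + s^4/24 - s^6/1152) ≤ 3.141592 - s := by
        nlinarith [sq_nonneg (s - 0.8127), sq_nonneg (s - 0.8), mul_nonneg hs0 (sub_nonneg.2 hs2),
          mul_nonneg (mul_nonneg hs0 hs0) (sub_nonneg.2 hs2), sq_nonneg s,
          mul_nonneg (mul_nonneg hs0 (sub_nonneg.2 hs2)) (sq_nonneg (s - 0.8127)),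
          mul_nonneg (mul_nonneg hs0 hs0) (sq_nonneg (s - 0.8127))]
      nlinarith [hcos, hmain, hps]
  rw [hct] at key
  nlinarith [mul_le_mul_of_nonneg_left hπ'.le (by linarith : (0:ℝ) ≤ 0.439 * (1 - x))]
end

section
/- For every real number x with −1 ≤ x ≤ 1, it holds that 1 − arccos(x)/π ≥ (0.878/2)·(1 + x). -/
/-!
With `θ = arccos x` the claim reads `0.439 (1 + cos θ) ≤ 1 - θ / π` for `θ ∈ [0, π]`.
For `θ` near `π` the bound `1 + cos θ ≤ (π - θ)² / 2` suffices. On `[0, 1.71]` the quartic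
Taylor bound `cos θ ≤ 1 - θ²/2 + θ⁴/24`, together with `3.14 < π`, reduces it to a polynomial
inequality, which is tight to about `2 · 10⁻⁴` near `θ ≈ 0.816`.
-/

open Real

theorem Real.cos_le_one_sub_sq_div_two_add_pow_four_div_24 (x : ℝ) :
    cos x ≤ 1 - x ^ 2 / 2 + x ^ 4 / 24 := by
  wlog hx : 0 ≤ x generalizing x
  · simpa [Even.neg_pow ⟨2, rfl⟩] using this (-x) (by linarith)
  rcases le_or_gt (x ^ 2) 12 with hx12 | hx12
  · have hsin : x / 2 - (x / 2) ^ 3 / 6 ≤ sin (x / 2) := sin_ge_sub_cube (by positivity)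
    have hcube : 0 ≤ x / 2 - (x / 2) ^ 3 / 6 := by nlinarith
    have hcos : cos x = 1 - 2 * sin (x / 2) ^ 2 := by
      rw [← cos_two_mul_eq_one_sub, mul_div_cancel₀ x two_ne_zero]
    rw [hcos]
    nlinarith [pow_le_pow_left₀ hcube hsin 2, pow_nonneg hx 6]
  -- for `x² ≥ 12` the right-hand side is at least `1`
  · nlinarith [cos_le_one x]

theorem one_add_cos_le_sq_pi_sub_div_two (θ : ℝ) : 1 + cos θ ≤ (π - θ) ^ 2 / 2 := by
  linarith [one_sub_sq_div_two_le_cos (x := π - θ), cos_pi_sub θ]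

theorem gw_polynomial_bound (t : ℝ) (h0 : 0 ≤ t) (h1 : t ≤ 171 / 100) :
    439 / 1000 * (2 - t ^ 2 / 2 + t ^ 4 / 24) ≤ 1 - t / (314 / 100) := by
  have h1' : 0 ≤ 171 / 100 - t := sub_nonneg.2 h1
  -- The difference is `(t - 102/125)²` times a concave quadratic that is positive at both
  -- endpoints, plus a linear remainder that is positive on the interval.
  have hsq := sq_nonneg (t - 102 / 125)
  nlinarith [mul_nonneg (mul_nonneg h0 h1') hsq, mul_nonneg h0 hsq, mul_nonneg h1' hsq]

theorem gw_one_add_cos_le {θ : ℝ} (h0 : 0 ≤ θ) (hπ : θ ≤ π) :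
    0.878 / 2 * (1 + cos θ) ≤ 1 - θ / π := by
  rcases le_or_gt θ (171 / 100) with hθ | hθ
  · have hdiv : θ / π ≤ θ / (314 / 100) :=
      div_le_div_of_nonneg_left h0 (by norm_num) (by linarith [pi_gt_d2])
    have hpoly := gw_polynomial_bound θ h0 hθ
    have hcos := cos_le_one_sub_sq_div_two_add_pow_four_div_24 θ
    norm_num
    linarith
  · have hφ : π - θ ≤ 144 / 100 := by linarith [pi_lt_d2]
    have hcos := one_add_cos_le_sq_pi_sub_div_two θ
    have hsub : 1 - θ / π = (π - θ) / π := by field_simp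
    rw [hsub, le_div_iff₀ pi_pos]
    nlinarith [pi_lt_d2, mul_nonneg (sub_nonneg.2 hπ) (sub_nonneg.2 hφ),
      mul_nonneg (sub_nonneg.2 hπ) (sub_nonneg.2 hπ)]

/-- The companion Goemans–Williamson inequality: `1 - arccos(x)/π ≥ (0.878/2)(1 + x)`
for all `x ∈ [-1, 1]`. -/
theorem one_sub_arccos_ge_gw (x : ℝ) (h1 : -1 ≤ x) (h2 : x ≤ 1) :
    1 - Real.arccos x / Real.pi ≥ (0.878 / 2) * (1 + x) := by
  have h := gw_one_add_cos_le (arccos_nonneg x) (arccos_le_pi x)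
  rwa [cos_arccos h1 h2] at h
end
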